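/- Let L ≥ 1, let q_1,…,q_M ∈ Δ^L, let U := conv{q_1,…,q_M}, and let ρ(Z) = max_{q ∈ U} Σ_{j=1}^L q(j) Z(j). Let A_1,…,A_L ∈ ℝ^{n×n}, B_1,…,B_L ∈ ℝ^{n×m}, let Q, R, P be symmetric positive definite, and suppose there exists F ∈ ℝ^{m×n} such that for every l ∈ {1,…,M} the matrix Σ_{j=1}^L q_l(j)(A_j + B_j F)ᵀ P (A_j + B_j F) − P + FᵀRF + Q is negative semidefinite. Define V_0(x) := xᵀPx, V_{h+1}(x) := inf_{u} [xᵀQx + uᵀRu + ρ(j ↦ V_h(A_j x + B_j u))], and fix N ≥ 1. Suppose π : ℝ^n → ℝ^m attains the infimum in the definition of V_N, i.e., V_N(x) = xᵀQx + π(x)ᵀRπ(x) + ρ(j ↦ V_{N−1}(A_j x + B_j π(x))) for all x. Then for every x ∈ ℝ^n: V_N(x) ≥ xᵀQx + π(x)ᵀRπ(x) + ρ(j ↦ V_N(A_j x + B_j π(x))). -/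

import Mathlib

/-!
The terminal cost `V₀(x) = xᵀPx` is a control Lyapunov function for the risk-averse
dynamics: the LMI says that under the feedback `u = Fx` the expected terminal cost under every
vertex `q_l` decreases by at least the stage cost, and a linear functional of `q` bounded on the
vertices is bounded on their convex hull, so `V₁ ≤ V₀`. The Bellman operator is monotone because
`ρ` is (its weights are nonnegative), hence `V_{h+1} ≤ V_h` for all `h`, and in particular
`V_N ≤ V_{N-1}`; feeding this into the optimality of `π` gives the descent inequality.
-/

open Matrix

variable {ι n m : Type*} [Fintype n] [Fintype m]

def IsWorstCaseExpectation [Fintype ι] (U : Set (ι → ℝ)) (ρ : (ι → ℝ) → ℝ) : Prop :=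
  ∀ Z, IsGreatest ((fun q => ∑ j, q j * Z j) '' U) (ρ Z)

namespace IsWorstCaseExpectation

variable [Fintype ι] {U : Set (ι → ℝ)} {ρ : (ι → ℝ) → ℝ}

theorem map_zero (hρ : IsWorstCaseExpectation U ρ) : ρ 0 = 0 := by
  obtain ⟨q, -, hq⟩ := (hρ 0).1
  simpa using hq.symm

theorem monotone (hρ : IsWorstCaseExpectation U ρ) (hU : ∀ q ∈ U, 0 ≤ q) : Monotone ρ := by
  intro Z W hZW
  obtain ⟨q, hqU, hq⟩ := (hρ Z).1
  rw [← hq]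
  calc ∑ j, q j * Z j ≤ ∑ j, q j * W j :=
        Finset.sum_le_sum fun j _ => mul_le_mul_of_nonneg_left (hZW j) (hU q hqU j)
    _ ≤ ρ W := (hρ W).2 ⟨q, hqU, rfl⟩

theorem nonneg (hρ : IsWorstCaseExpectation U ρ) (hU : ∀ q ∈ U, 0 ≤ q) {Z : ι → ℝ}
    (hZ : 0 ≤ Z) : 0 ≤ ρ Z :=
  hρ.map_zero ▸ hρ.monotone hU hZ

theorem le_of_forall_le {S : Set (ι → ℝ)} (hρ : IsWorstCaseExpectation (convexHull ℝ S) ρ)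
    {Z : ι → ℝ} {d : ℝ} (h : ∀ q ∈ S, ∑ j, q j * Z j ≤ d) : ρ Z ≤ d := by
  have hlin : IsLinearMap ℝ fun q : ι → ℝ => ∑ j, q j * Z j :=
    ⟨fun a b => by simp [add_mul, Finset.sum_add_distrib],
      fun c a => by simp [Finset.mul_sum, mul_assoc]⟩
  obtain ⟨q, hq, hqZ⟩ := (hρ Z).1
  exact hqZ ▸ convexHull_min h (convex_halfSpace_le hlin d) hq

end IsWorstCaseExpectation

theorem dotProduct_transpose_mul_mul_mulVec {k : Type*} [Fintype k] (C : Matrix k n ℝ)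
    (D : Matrix k k ℝ) (x : n → ℝ) :
    x ⬝ᵥ ((Cᵀ * D * C) *ᵥ x) = (C *ᵥ x) ⬝ᵥ (D *ᵥ (C *ᵥ x)) := by
  rw [← mulVec_mulVec, ← mulVec_mulVec, dotProduct_mulVec, vecMul_transpose]

theorem quadForm_descent_of_posSemidef [Fintype ι] {P Q : Matrix n n ℝ} {R : Matrix m m ℝ}
    {F : Matrix m n ℝ} {K : ι → Matrix n n ℝ} {w : ι → ℝ}
    (h : (-((∑ j, w j • ((K j)ᵀ * P * K j)) - P + Fᵀ * R * F + Q)).PosSemidef) (x : n → ℝ) :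
    ∑ j, w j * ((K j *ᵥ x) ⬝ᵥ (P *ᵥ (K j *ᵥ x))) ≤
      x ⬝ᵥ (P *ᵥ x) - x ⬝ᵥ (Q *ᵥ x) - (F *ᵥ x) ⬝ᵥ (R *ᵥ (F *ᵥ x)) := by
  have hx := h.dotProduct_mulVec_nonneg x
  simp only [star_trivial, neg_mulVec, add_mulVec, sub_mulVec, sum_mulVec, smul_mulVec,
    dotProduct_neg, dotProduct_add, dotProduct_sub, dotProduct_sum, dotProduct_smul, smul_eq_mul,
    dotProduct_transpose_mul_mul_mulVec] at hx
  linarith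

noncomputable def bellman (Q : Matrix n n ℝ) (R : Matrix m m ℝ) (A : ι → Matrix n n ℝ)
    (B : ι → Matrix n m ℝ) (ρ : (ι → ℝ) → ℝ) (W : (n → ℝ) → ℝ) (x : n → ℝ) : ℝ :=
  ⨅ u : m → ℝ, x ⬝ᵥ (Q *ᵥ x) + u ⬝ᵥ (R *ᵥ u) + ρ (fun j => W (A j *ᵥ x + B j *ᵥ u))

section Bellman

variable {Q : Matrix n n ℝ} {R : Matrix m m ℝ} {A : ι → Matrix n n ℝ} {B : ι → Matrix n m ℝ}
  {ρ : (ι → ℝ) → ℝ} {W W' : (n → ℝ) → ℝ}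

theorem bellman_objective_nonneg (hQ : Q.PosSemidef) (hR : R.PosSemidef)
    (hρ : ∀ Z, 0 ≤ Z → 0 ≤ ρ Z) (hW : 0 ≤ W) (x : n → ℝ) (u : m → ℝ) :
    0 ≤ x ⬝ᵥ (Q *ᵥ x) + u ⬝ᵥ (R *ᵥ u) + ρ (fun j => W (A j *ᵥ x + B j *ᵥ u)) := by
  have hx := hQ.dotProduct_mulVec_nonneg x
  have hu := hR.dotProduct_mulVec_nonneg u
  simp only [star_trivial] at hx hu
  have := hρ _ fun j => hW (A j *ᵥ x + B j *ᵥ u)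
  positivity

theorem bellman_le (hQ : Q.PosSemidef) (hR : R.PosSemidef) (hρ : ∀ Z, 0 ≤ Z → 0 ≤ ρ Z)
    (hW : 0 ≤ W) (x : n → ℝ) (u : m → ℝ) :
    bellman Q R A B ρ W x ≤ x ⬝ᵥ (Q *ᵥ x) + u ⬝ᵥ (R *ᵥ u) + ρ (fun j => W (A j *ᵥ x + B j *ᵥ u)) :=
  ciInf_le ⟨0, by rintro _ ⟨u, rfl⟩; exact bellman_objective_nonneg hQ hR hρ hW x u⟩ u

theorem bellman_nonneg (hQ : Q.PosSemidef) (hR : R.PosSemidef) (hρ : ∀ Z, 0 ≤ Z → 0 ≤ ρ Z)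
    (hW : 0 ≤ W) : 0 ≤ bellman Q R A B ρ W :=
  fun x => le_ciInf (bellman_objective_nonneg hQ hR hρ hW x)

theorem bellman_mono (hQ : Q.PosSemidef) (hR : R.PosSemidef) (hρ₀ : ∀ Z, 0 ≤ Z → 0 ≤ ρ Z)
    (hρ : Monotone ρ) (hW : 0 ≤ W) (hWW' : W ≤ W') :
    bellman Q R A B ρ W ≤ bellman Q R A B ρ W' := fun x =>
  ciInf_mono ⟨0, by rintro _ ⟨u, rfl⟩; exact bellman_objective_nonneg hQ hR hρ₀ hW x u⟩
    fun u => by gcongr; exact hρ fun j => hWW' _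

theorem antitone_valueIteration (hQ : Q.PosSemidef) (hR : R.PosSemidef)
    (hρ₀ : ∀ Z, 0 ≤ Z → 0 ≤ ρ Z) (hρ : Monotone ρ) {V : ℕ → (n → ℝ) → ℝ}
    (hVs : ∀ h, V (h + 1) = bellman Q R A B ρ (V h)) (hV₀ : 0 ≤ V 0)
    (hV₁ : bellman Q R A B ρ (V 0) ≤ V 0) : Antitone V := by
  have hnonneg : ∀ h, 0 ≤ V h := fun h => by
    induction h with
    | zero => exact hV₀
    | succ h ih => rw [hVs]; exact bellman_nonneg hQ hR hρ₀ ih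
  refine antitone_nat_of_succ_le fun h => ?_
  induction h with
  | zero => rw [hVs]; exact hV₁
  | succ h ih =>
    have := bellman_mono (A := A) (B := B) hQ hR hρ₀ hρ (hnonneg (h + 1)) ih
    rwa [← hVs, ← hVs] at this

theorem bellman_quadForm_le [Fintype ι] {S : Set (ι → ℝ)}
    (hρ : IsWorstCaseExpectation (convexHull ℝ S) ρ) (hρ₀ : ∀ Z, 0 ≤ Z → 0 ≤ ρ Z)
    (hQ : Q.PosSemidef) (hR : R.PosSemidef) {P : Matrix n n ℝ} (hP : P.PosSemidef)
    {F : Matrix m n ℝ}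
    (hlmi : ∀ w ∈ S, (-((∑ j, w j • ((A j + B j * F)ᵀ * P * (A j + B j * F))) - P
      + Fᵀ * R * F + Q)).PosSemidef) :
    bellman Q R A B ρ (fun x => x ⬝ᵥ (P *ᵥ x)) ≤ fun x => x ⬝ᵥ (P *ᵥ x) := fun x => by
  have hP₀ : 0 ≤ fun x : n → ℝ => x ⬝ᵥ (P *ᵥ x) := fun x => by
    simpa using hP.dotProduct_mulVec_nonneg x
  have hdescent := hρ.le_of_forall_le (Z := fun j => (A j *ᵥ x + B j *ᵥ (F *ᵥ x)) ⬝ᵥ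
      (P *ᵥ (A j *ᵥ x + B j *ᵥ (F *ᵥ x)))) fun w hw => by
    simpa only [add_mulVec, ← mulVec_mulVec] using quadForm_descent_of_posSemidef (hlmi w hw) x
  have := bellman_le (A := A) (B := B) hQ hR hρ₀ hP₀ x (F *ᵥ x)
  linarith

end Bellman

theorem stmt_11_general (L n m M : ℕ)
    (q : Fin M → Fin L → ℝ) (hq : ∀ l, q l ∈ stdSimplex ℝ (Fin L))
    (ρ : (Fin L → ℝ) → ℝ)
    (hρ : ∀ Z : Fin L → ℝ,
      IsGreatest ((fun qq => ∑ j, qq j * Z j) '' (convexHull ℝ (Set.range q))) (ρ Z))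
    (A : Fin L → Matrix (Fin n) (Fin n) ℝ) (B : Fin L → Matrix (Fin n) (Fin m) ℝ)
    (Q P : Matrix (Fin n) (Fin n) ℝ) (R : Matrix (Fin m) (Fin m) ℝ)
    (hQ : Q.PosDef) (hP : P.PosDef) (hR : R.PosDef)
    (F : Matrix (Fin m) (Fin n) ℝ)
    (hlmi : ∀ l : Fin M,
      (-((∑ j, q l j • ((A j + B j * F)ᵀ * P * (A j + B j * F))) - P
          + Fᵀ * R * F + Q)).PosSemidef)
    (V : ℕ → (Fin n → ℝ) → ℝ)
    (hV0 : ∀ x, V 0 x = x ⬝ᵥ (P *ᵥ x))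
    (hVs : ∀ (h : ℕ) (x : Fin n → ℝ), V (h + 1) x =
      ⨅ u : Fin m → ℝ, (x ⬝ᵥ (Q *ᵥ x) + u ⬝ᵥ (R *ᵥ u)
        + ρ (fun j => V h (A j *ᵥ x + B j *ᵥ u))))
    (N : ℕ)
    (π : (Fin n → ℝ) → (Fin m → ℝ))
    (hπ : ∀ x, V N x = x ⬝ᵥ (Q *ᵥ x) + (π x) ⬝ᵥ (R *ᵥ (π x))
      + ρ (fun j => V (N - 1) (A j *ᵥ x + B j *ᵥ (π x)))) :
    ∀ x : Fin n → ℝ,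
      x ⬝ᵥ (Q *ᵥ x) + (π x) ⬝ᵥ (R *ᵥ (π x))
        + ρ (fun j => V N (A j *ᵥ x + B j *ᵥ (π x))) ≤ V N x := by
  have hU : ∀ w ∈ convexHull ℝ (Set.range q), 0 ≤ w := fun w hw =>
    (convexHull_min (Set.range_subset_iff.2 hq) (convex_stdSimplex ℝ _) hw).1
  have hρmono : Monotone ρ := IsWorstCaseExpectation.monotone hρ hU
  have hρ₀ : ∀ Z, 0 ≤ Z → 0 ≤ ρ Z := fun _ => IsWorstCaseExpectation.nonneg hρ hU
  have hV₀ : 0 ≤ V 0 := fun x => by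
    simpa [hV0] using hP.posSemidef.dotProduct_mulVec_nonneg x
  have hV₁ : bellman Q R A B ρ (V 0) ≤ V 0 := by
    rw [show V 0 = _ from funext hV0]
    exact bellman_quadForm_le hρ hρ₀ hQ.posSemidef hR.posSemidef hP.posSemidef
      (Set.forall_mem_range.2 hlmi)
  have hanti := antitone_valueIteration hQ.posSemidef hR.posSemidef hρ₀ hρmono
    (fun h => funext (hVs h)) hV₀ hV₁
  intro x
  rw [hπ x]
  gcongr
  exact hρmono fun j => hanti (Nat.sub_le N 1) _

/-- The Lyapunov descent inequality (the paper's chain of inequalities (13)) for the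
risk-averse MPC control law `π` attaining the `N`-step value function. -/
theorem stmt_11 (L n m M : ℕ) (hL : 1 ≤ L) (hM : 1 ≤ M)
    (q : Fin M → Fin L → ℝ) (hq : ∀ l, q l ∈ stdSimplex ℝ (Fin L))
    (ρ : (Fin L → ℝ) → ℝ)
    (hρ : ∀ Z : Fin L → ℝ,
      IsGreatest ((fun qq => ∑ j, qq j * Z j) '' (convexHull ℝ (Set.range q))) (ρ Z))
    (A : Fin L → Matrix (Fin n) (Fin n) ℝ) (B : Fin L → Matrix (Fin n) (Fin m) ℝ)
    (Q P : Matrix (Fin n) (Fin n) ℝ) (R : Matrix (Fin m) (Fin m) ℝ)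
    (hQ : Q.PosDef) (hP : P.PosDef) (hR : R.PosDef)
    (F : Matrix (Fin m) (Fin n) ℝ)
    (hlmi : ∀ l : Fin M,
      (-((∑ j, q l j • ((A j + B j * F)ᵀ * P * (A j + B j * F))) - P
          + Fᵀ * R * F + Q)).PosSemidef)
    (V : ℕ → (Fin n → ℝ) → ℝ)
    (hV0 : ∀ x, V 0 x = x ⬝ᵥ (P *ᵥ x))
    (hVs : ∀ (h : ℕ) (x : Fin n → ℝ), V (h + 1) x =
      ⨅ u : Fin m → ℝ, (x ⬝ᵥ (Q *ᵥ x) + u ⬝ᵥ (R *ᵥ u)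
        + ρ (fun j => V h (A j *ᵥ x + B j *ᵥ u))))
    (N : ℕ) (hN : 1 ≤ N)
    (π : (Fin n → ℝ) → (Fin m → ℝ))
    (hπ : ∀ x, V N x = x ⬝ᵥ (Q *ᵥ x) + (π x) ⬝ᵥ (R *ᵥ (π x))
      + ρ (fun j => V (N - 1) (A j *ᵥ x + B j *ᵥ (π x)))) :
    ∀ x : Fin n → ℝ,
      x ⬝ᵥ (Q *ᵥ x) + (π x) ⬝ᵥ (R *ᵥ (π x))
        + ρ (fun j => V N (A j *ᵥ x + B j *ᵥ (π x))) ≤ V N x :=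
  stmt_11_general L n m M q hq ρ hρ A B Q P R hQ hP hR F hlmi V hV0 hVs N π hπ
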